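/- Let G be a graph with set of tubes T(G). Define h : T(G) → ℝ by h(t) = −|{s ∈ T(G) : s ⊆ t}|. Then for any pair of exchangeable tubes t, t' of G, one has h(t) + h(t') − h(t ∪ t') − Σ_{s ∈ cc(t ∩ t')} h(s) = |{s ∈ T(G) : s ⊄ t, s ⊄ t', s ⊆ t ∪ t'}| > 0. -/

import Mathlib

open scoped Classical

variable {V : Type*} [Fintype V] [DecidableEq V]

/-- A tube of `G`: a nonempty vertex subset inducing a connected subgraph. -/
def IsTube (G : SimpleGraph V) (t : Finset V) : Prop :=
  t.Nonempty ∧ (G.induce (t : Set V)).Connected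

/-- The set of all tubes of `G`. -/
noncomputable def tubes (G : SimpleGraph V) : Finset (Finset V) :=
  Finset.univ.powerset.filter (fun t => IsTube G t)

/-- Compatibility of tubes: nested, or disjoint with non-tube union. -/
def Compatible (G : SimpleGraph V) (t t' : Finset V) : Prop :=
  t ⊆ t' ∨ t' ⊆ t ∨ (t ∩ t' = ∅ ∧ ¬ IsTube G (t ∪ t'))

/-- A tubing on `G`: pairwise compatible tubes containing all connected components
(that is, all inclusion-maximal tubes). -/
def IsTubing (G : SimpleGraph V) (T : Finset (Finset V)) : Prop :=
  (∀ t ∈ T, IsTube G t) ∧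
  (∀ t ∈ T, ∀ t' ∈ T, Compatible G t t') ∧
  (∀ K : Finset V, IsTube G K → (∀ t : Finset V, IsTube G t → K ⊆ t → K = t) → K ∈ T)

/-- A maximal tubing on `G`. -/
def IsMaxTubing (G : SimpleGraph V) (T : Finset (Finset V)) : Prop :=
  IsTubing G T ∧ ∀ T', IsTubing G T' → T ⊆ T' → T = T'

/-- Two tubes are exchangeable if two maximal tubings differ exactly by them. -/
def ExchangeableT (G : SimpleGraph V) (t t' : Finset V) : Prop :=
  t ≠ t' ∧ ∃ T T', IsMaxTubing G T ∧ IsMaxTubing G T' ∧ t ∈ T ∧ t' ∈ T' ∧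
    T.erase t = T'.erase t'

/-- `u` is a neighbor of the vertex set `s`: `u ∉ s` and `u` is adjacent to some vertex of `s`. -/
def NbrOf (G : SimpleGraph V) (s : Finset V) (u : V) : Prop :=
  u ∉ s ∧ ∃ x ∈ s, G.Adj u x

/-- Connected components of the induced subgraph on `U`:
inclusion-maximal tubes contained in `U`. -/
noncomputable def gccSet (G : SimpleGraph V) (U : Finset V) : Finset (Finset V) :=
  (tubes G).filter (fun K => K ⊆ U ∧ ∀ C : Finset V, IsTube G C → C ⊆ U → K ⊆ C → K = C)

/-- Characteristic vector of a subset of `V` in `ℝ^V`. -/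
def chi (S : Finset V) : V → ℝ := fun v => if v ∈ S then 1 else 0

/-- `w` is a non-disconnecting vertex of the set `s`. -/
def NonDisc (G : SimpleGraph V) (s : Finset V) (w : V) : Prop :=
  w ∈ s ∧ (s.erase w = ∅ ∨ IsTube G (s.erase w))

/-- The height function `h(t) = -|{s ∈ T(G) : s ⊆ t}|`. -/
noncomputable def hsub (G : SimpleGraph V) (t : Finset V) : ℝ :=
  -(((tubes G).filter (fun s => s ⊆ t)).card : ℝ)

/-!
Exchangeable tubes `t, t'` are incompatible, since otherwise `t'` could be added to the maximal
tubing containing `t`. Hence neither contains the other and `t ∪ t'` is a tube. The components of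
`t ∩ t'` partition the tubes inside `t ∩ t'`, so the sum over them is `-#{s ⊆ t ∩ t'}`, and the
identity is inclusion–exclusion for the families `{s ⊆ t}` and `{s ⊆ t'}` inside `{s ⊆ t ∪ t'}`.
The tube `t ∪ t'` itself witnesses positivity.
-/

theorem mem_tubes {α : Type*} [Fintype α] {G : SimpleGraph α} {s : Finset α} :
    s ∈ tubes G ↔ IsTube G s := by
  simp [tubes]

theorem IsTube.union {α : Type*} [DecidableEq α] {G : SimpleGraph α} {a b : Finset α}
    (ha : IsTube G a) (hb : IsTube G b) (hab : (a ∩ b).Nonempty) : IsTube G (a ∪ b) := by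
  refine ⟨ha.1.mono Finset.subset_union_left, ?_⟩
  rw [Finset.coe_union]
  exact SimpleGraph.induce_union_connected ha.2.preconnected hb.2.preconnected
    (by rwa [← Finset.coe_inter, Finset.coe_nonempty])

theorem Compatible.symm {α : Type*} [DecidableEq α] {G : SimpleGraph α} {a b : Finset α}
    (h : Compatible G a b) : Compatible G b a := by
  rcases h with h | h | ⟨hdisj, hunion⟩
  · exact Or.inr (Or.inl h)
  · exact Or.inl h
  · exact Or.inr (Or.inr ⟨by rwa [Finset.inter_comm], by rwa [Finset.union_comm]⟩)

theorem IsTubing.insert {α : Type*} [DecidableEq α] {G : SimpleGraph α}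
    {T : Finset (Finset α)} {s : Finset α} (hT : IsTubing G T) (hs : IsTube G s)
    (hc : ∀ u ∈ T, Compatible G s u) : IsTubing G (insert s T) := by
  obtain ⟨htubes, hcompat, hcomponents⟩ := hT
  refine ⟨?_, ?_, fun K hK hmax => Finset.mem_insert_of_mem (hcomponents K hK hmax)⟩
  · intro u hu
    rcases Finset.mem_insert.mp hu with rfl | hu
    exacts [hs, htubes u hu]
  · intro a ha b hb
    rw [Finset.mem_insert] at ha hb
    rcases ha with rfl | ha <;> rcases hb with rfl | hb
    exacts [Or.inl subset_rfl, hc b hb, (hc a ha).symm, hcompat a ha b hb]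

theorem IsMaxTubing.mem_of_forall_compatible {α : Type*} [DecidableEq α] {G : SimpleGraph α}
    {T : Finset (Finset α)} {s : Finset α} (hT : IsMaxTubing G T) (hs : IsTube G s)
    (hc : ∀ u ∈ T, Compatible G s u) : s ∈ T := by
  rw [hT.2 _ (hT.1.insert hs hc) (Finset.subset_insert s T)]
  exact Finset.mem_insert_self s T

section Exchangeable

variable {α : Type*} [DecidableEq α] {G : SimpleGraph α} {t t' : Finset α}

theorem ExchangeableT.isTube_left (hex : ExchangeableT G t t') : IsTube G t := by
  obtain ⟨-, T, -, hT, -, htT, -⟩ := hex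
  exact hT.1.1 t htT

theorem ExchangeableT.isTube_right (hex : ExchangeableT G t t') : IsTube G t' := by
  obtain ⟨-, -, T', -, hT', -, ht'T', -⟩ := hex
  exact hT'.1.1 t' ht'T'

theorem ExchangeableT.not_compatible (hex : ExchangeableT G t t') : ¬ Compatible G t t' := by
  obtain ⟨hne, T, T', hT, hT', htT, ht'T', hE⟩ := hex
  intro hc
  have ht'T : t' ∈ T := by
    refine hT.mem_of_forall_compatible (hT'.1.1 t' ht'T') fun u hu => ?_
    by_cases hut : u = t
    · exact hut ▸ hc.symm
    · have hu' : u ∈ T'.erase t' := hE ▸ Finset.mem_erase.mpr ⟨hut, hu⟩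
      exact hT'.1.2.1 t' ht'T' u (Finset.mem_of_mem_erase hu')
  have : t' ∈ T'.erase t' := hE ▸ Finset.mem_erase.mpr ⟨Ne.symm hne, ht'T⟩
  exact Finset.notMem_erase t' T' this

theorem ExchangeableT.not_subset (hex : ExchangeableT G t t') : ¬ t ⊆ t' :=
  fun h => hex.not_compatible (Or.inl h)

theorem ExchangeableT.not_supset (hex : ExchangeableT G t t') : ¬ t' ⊆ t :=
  fun h => hex.not_compatible (Or.inr (Or.inl h))

theorem ExchangeableT.isTube_union (hex : ExchangeableT G t t') : IsTube G (t ∪ t') := by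
  rcases (t ∩ t').eq_empty_or_nonempty with hdisj | hmeet
  · by_contra hunion
    exact hex.not_compatible (Or.inr (Or.inr ⟨hdisj, hunion⟩))
  · exact hex.isTube_left.union hex.isTube_right hmeet

end Exchangeable

section Components

variable {α : Type*} [Fintype α] [DecidableEq α] {G : SimpleGraph α} {U : Finset α}

theorem exists_mem_gccSet_superset {s : Finset α} (hs : IsTube G s) (hsU : s ⊆ U) :
    ∃ K ∈ gccSet G U, s ⊆ K := by
  set P := (tubes G).filter (fun K => s ⊆ K ∧ K ⊆ U)
  have hsP : s ∈ P := Finset.mem_filter.mpr ⟨mem_tubes.mpr hs, subset_rfl, hsU⟩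
  obtain ⟨K, hKP, hKmax⟩ := Finset.exists_max_image P Finset.card ⟨s, hsP⟩
  obtain ⟨hKtube, hsK, hKU⟩ := Finset.mem_filter.mp hKP
  refine ⟨K, Finset.mem_filter.mpr ⟨hKtube, hKU, fun C hC hCU hKC => ?_⟩, hsK⟩
  exact Finset.eq_of_subset_of_card_le hKC
    (hKmax C (Finset.mem_filter.mpr ⟨mem_tubes.mpr hC, hsK.trans hKC, hCU⟩))

theorem eq_of_mem_gccSet_of_subset {K K' s : Finset α} (hK : K ∈ gccSet G U)
    (hK' : K' ∈ gccSet G U) (hs : IsTube G s) (hsK : s ⊆ K) (hsK' : s ⊆ K') : K = K' := by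
  simp only [gccSet, Finset.mem_filter, mem_tubes] at hK hK'
  have hunion : IsTube G (K ∪ K') := hK.1.union hK'.1 (hs.1.mono (Finset.subset_inter hsK hsK'))
  have hunionU : K ∪ K' ⊆ U := Finset.union_subset hK.2.1 hK'.2.1
  exact (hK.2.2 _ hunion hunionU Finset.subset_union_left).trans
    (hK'.2.2 _ hunion hunionU Finset.subset_union_right).symm

theorem sum_card_filter_subset_gccSet (U : Finset α) :
    ∑ K ∈ gccSet G U, ((tubes G).filter (· ⊆ K)).card = ((tubes G).filter (· ⊆ U)).card := by
  rw [← Finset.card_biUnion]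
  · congr 1
    ext s
    simp only [Finset.mem_biUnion, Finset.mem_filter, mem_tubes]
    constructor
    · rintro ⟨K, hK, hs, hsK⟩
      exact ⟨hs, hsK.trans (Finset.mem_filter.mp hK).2.1⟩
    · rintro ⟨hs, hsU⟩
      obtain ⟨K, hK, hsK⟩ := exists_mem_gccSet_superset hs hsU
      exact ⟨K, hK, hs, hsK⟩
  · intro K hK K' hK' hne
    refine Finset.disjoint_left.mpr fun s hsK hsK' => hne ?_
    simp only [Finset.mem_filter, mem_tubes] at hsK hsK'
    exact eq_of_mem_gccSet_of_subset hK hK' hsK.1 hsK.2 hsK'.2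

theorem sum_hsub_gccSet (U : Finset α) :
    ∑ K ∈ gccSet G U, hsub G K = -(((tubes G).filter (· ⊆ U)).card : ℝ) := by
  simp only [hsub, Finset.sum_neg_distrib, ← sum_card_filter_subset_gccSet U, Nat.cast_sum]

end Components

theorem Finset.card_filter_subset_union_add_card_filter_subset_inter {α : Type*} [DecidableEq α]
    (F : Finset (Finset α)) (a b : Finset α) :
    (F.filter (· ⊆ a ∪ b)).card + (F.filter (· ⊆ a ∩ b)).card =
      (F.filter (· ⊆ a)).card + (F.filter (· ⊆ b)).card +
        (F.filter (fun s => ¬ s ⊆ a ∧ ¬ s ⊆ b ∧ s ⊆ a ∪ b)).card := by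
  have hinter : F.filter (· ⊆ a) ∩ F.filter (· ⊆ b) = F.filter (· ⊆ a ∩ b) := by
    rw [← Finset.filter_and]
    simp only [Finset.subset_inter_iff]
  have hsplit := Finset.card_filter_add_card_filter_not (s := F.filter (· ⊆ a ∪ b))
    (p := fun s => s ⊆ a ∨ s ⊆ b)
  rw [Finset.filter_filter, Finset.filter_filter] at hsplit
  have hcovered : F.filter (fun s => s ⊆ a ∪ b ∧ (s ⊆ a ∨ s ⊆ b)) =
      F.filter (· ⊆ a) ∪ F.filter (· ⊆ b) := by
    rw [← Finset.filter_or]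
    refine Finset.filter_congr fun s _ => ⟨And.right, fun h => ⟨?_, h⟩⟩
    rcases h with h | h
    exacts [h.trans Finset.subset_union_left, h.trans Finset.subset_union_right]
  have hrest : F.filter (fun s => s ⊆ a ∪ b ∧ ¬(s ⊆ a ∨ s ⊆ b)) =
      F.filter (fun s => ¬ s ⊆ a ∧ ¬ s ⊆ b ∧ s ⊆ a ∪ b) :=
    Finset.filter_congr fun s _ => by tauto
  have hunion := Finset.card_union_add_card_inter (F.filter (· ⊆ a)) (F.filter (· ⊆ b))
  rw [hcovered, hrest] at hsplit
  rw [hinter] at hunion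
  omega

theorem stmt14_general (G : SimpleGraph V) (t t' : Finset V)
    (hex : ExchangeableT G t t') :
    hsub G t + hsub G t' - hsub G (t ∪ t') - ∑ s ∈ gccSet G (t ∩ t'), hsub G s =
      (((tubes G).filter (fun s => ¬ s ⊆ t ∧ ¬ s ⊆ t' ∧ s ⊆ t ∪ t')).card : ℝ) ∧
    0 < ((tubes G).filter (fun s => ¬ s ⊆ t ∧ ¬ s ⊆ t' ∧ s ⊆ t ∪ t')).card := by
  refine ⟨?_, Finset.card_pos.mpr ⟨t ∪ t', ?_⟩⟩
  · have hcount := congrArg (Nat.cast : ℕ → ℝ)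
      (Finset.card_filter_subset_union_add_card_filter_subset_inter (tubes G) t t')
    push_cast at hcount
    rw [sum_hsub_gccSet]
    simp only [hsub]
    linarith
  · exact Finset.mem_filter.mpr ⟨mem_tubes.mpr hex.isTube_union,
      fun h => hex.not_supset (Finset.subset_union_right.trans h),
      fun h => hex.not_subset (Finset.subset_union_left.trans h), subset_rfl⟩

theorem stmt14 (G : SimpleGraph V) (t t' : Finset V)
    (ht : IsTube G t) (ht' : IsTube G t') (hex : ExchangeableT G t t') :
    hsub G t + hsub G t' - hsub G (t ∪ t') - ∑ s ∈ gccSet G (t ∩ t'), hsub G s =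
      (((tubes G).filter (fun s => ¬ s ⊆ t ∧ ¬ s ⊆ t' ∧ s ⊆ t ∪ t')).card : ℝ) ∧
    0 < ((tubes G).filter (fun s => ¬ s ⊆ t ∧ ¬ s ⊆ t' ∧ s ⊆ t ∪ t')).card :=
  stmt14_general G t t' hex
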